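/- Let Ω ⊆ {(z₁,z₂) ∈ ℝ² : z₁ ≠ 0} be open and ζ : Ω → ℝ a smooth function satisfying ζ(z₁,z₂)·exp(ζ(z₁,z₂)) = exp(z₂/z₁)/z₁ on Ω, with ζ ≠ 0 and ζ ≠ −1 everywhere on Ω (so ζ is a branch of the Lambert W function of e^{z₂/z₁}/z₁). Then the function h := z₂/z₁ − ζ is a smooth solution of the inviscid Burgers equation ∂₁h + h·∂₂h = 0 on Ω, and the function w := z₂³/(6z₁) − (z₁²/2)·(ζ³/3 + (3/2)ζ² + 2ζ) is a smooth solution of the reduced equation ∂₁∂₂²w + (∂₂²w)·(∂₂³w) = 0 on Ω. -/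

import Mathlib

/-- First-coordinate partial derivative of a function on `ℝ²`. -/
noncomputable def d1 (f : ℝ × ℝ → ℝ) (p : ℝ × ℝ) : ℝ := deriv (fun s => f (s, p.2)) p.1

/-- Second-coordinate partial derivative of a function on `ℝ²`. -/
noncomputable def d2 (f : ℝ × ℝ → ℝ) (p : ℝ × ℝ) : ℝ := deriv (fun s => f (p.1, s)) p.2

/-- `w` is a smooth solution of the reduced equation `∂₁∂₂²w + (∂₂²w)·(∂₂³w) = 0` on `U`. -/
def IsRedSolOn (w : ℝ × ℝ → ℝ) (U : Set (ℝ × ℝ)) : Prop :=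
  ContDiffOn ℝ (⊤ : ℕ∞) w U ∧
    ∀ p ∈ U, d1 (d2 (d2 w)) p + d2 (d2 w) p * d2 (d2 (d2 w)) p = 0

/-- `h` is a smooth solution of the inviscid Burgers equation `∂₁h + h·∂₂h = 0` on `U`. -/
def IsBurgersSolOn (h : ℝ × ℝ → ℝ) (U : Set (ℝ × ℝ)) : Prop :=
  ContDiffOn ℝ (⊤ : ℕ∞) h U ∧ ∀ p ∈ U, d1 h p + h p * d2 h p = 0

/-!
Implicit differentiation of `ζ e^ζ = e^{z₂/z₁}/z₁` gives `∂₂ζ = ζ/((1 + ζ) z₁)` and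
`∂₁ζ = -ζ (z₁ + z₂)/((1 + ζ) z₁²)`. With these, the Burgers equation for `h = z₂/z₁ - ζ` is a
rational identity in `z₁, z₂, ζ`. Differentiating `w` twice in `z₂` gives exactly `h`, so the
reduced equation for `w` is the Burgers equation for `h`.
-/

open Filter Topology Real Set

section PartialDerivatives

variable {U : Set (ℝ × ℝ)} {p : ℝ × ℝ}

lemma IsOpen.eventually_mem_fst_line (hU : IsOpen U) (hp : p ∈ U) :
    ∀ᶠ s in 𝓝 p.1, (s, p.2) ∈ U :=
  (continuous_id.prodMk continuous_const).continuousAt.preimage_mem_nhds (hU.mem_nhds hp)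

lemma IsOpen.eventually_mem_snd_line (hU : IsOpen U) (hp : p ∈ U) :
    ∀ᶠ t in 𝓝 p.2, (p.1, t) ∈ U :=
  (continuous_const.prodMk continuous_id).continuousAt.preimage_mem_nhds (hU.mem_nhds hp)

lemma d1_congr_of_eqOn {f g : ℝ × ℝ → ℝ} (hU : IsOpen U) (hfg : EqOn f g U) (hp : p ∈ U) :
    d1 f p = d1 g p :=
  EventuallyEq.deriv_eq <| (hU.eventually_mem_fst_line hp).mono fun _ hs => hfg hs

lemma d2_congr_of_eqOn {f g : ℝ × ℝ → ℝ} (hU : IsOpen U) (hfg : EqOn f g U) (hp : p ∈ U) :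
    d2 f p = d2 g p :=
  EventuallyEq.deriv_eq <| (hU.eventually_mem_snd_line hp).mono fun _ ht => hfg ht

lemma IsRedSolOn.of_d2_d2_eqOn {w h : ℝ × ℝ → ℝ} (hU : IsOpen U)
    (hw : ContDiffOn ℝ (⊤ : ℕ∞) w U) (hh : IsBurgersSolOn h U) (hwh : EqOn (d2 (d2 w)) h U) :
    IsRedSolOn w U := by
  refine ⟨hw, fun p hp => ?_⟩
  rw [d1_congr_of_eqOn hU hwh hp, d2_congr_of_eqOn hU hwh hp, hwh hp]
  exact hh.2 p hp

end PartialDerivatives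

lemma hasDerivAt_of_mul_exp_eventuallyEq {f g : ℝ → ℝ} {x g' : ℝ} (hf : DifferentiableAt ℝ f x)
    (hg : HasDerivAt g g' x) (hfg : (fun s => f s * exp (f s)) =ᶠ[𝓝 x] g) (hf1 : f x ≠ -1) :
    HasDerivAt f (g' / ((1 + f x) * exp (f x))) x := by
  have h1 : 1 + f x ≠ 0 := fun h => hf1 (by linarith)
  have hg' := (hf.hasDerivAt.mul hf.hasDerivAt.exp).unique (hg.congr_of_eventuallyEq hfg)
  have hd : deriv f x = g' / ((1 + f x) * exp (f x)) := by
    rw [← hg']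
    field_simp
  exact hd ▸ hf.hasDerivAt

structure IsLambertBranchOn (ζ : ℝ × ℝ → ℝ) (Ω : Set (ℝ × ℝ)) : Prop where
  isOpen : IsOpen Ω
  fst_ne_zero : ∀ p ∈ Ω, p.1 ≠ 0
  contDiffOn : ContDiffOn ℝ (⊤ : ℕ∞) ζ Ω
  mul_exp_eq : ∀ p ∈ Ω, ζ p * exp (ζ p) = exp (p.2 / p.1) / p.1
  ne_neg_one : ∀ p ∈ Ω, ζ p ≠ -1

namespace IsLambertBranchOn

variable {ζ : ℝ × ℝ → ℝ} {Ω : Set (ℝ × ℝ)} {p : ℝ × ℝ}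

lemma one_add_ne_zero (hζ : IsLambertBranchOn ζ Ω) (hp : p ∈ Ω) : 1 + ζ p ≠ 0 :=
  fun h => hζ.ne_neg_one p hp (by linarith)

lemma differentiableAt (hζ : IsLambertBranchOn ζ Ω) (hp : p ∈ Ω) : DifferentiableAt ℝ ζ p :=
  (hζ.contDiffOn.contDiffAt (hζ.isOpen.mem_nhds hp)).differentiableAt (by simp)

lemma exp_div_eq (hζ : IsLambertBranchOn ζ Ω) (hp : p ∈ Ω) :
    exp (p.2 / p.1) = ζ p * exp (ζ p) * p.1 := by
  rw [hζ.mul_exp_eq p hp, div_mul_cancel₀ _ (hζ.fst_ne_zero p hp)]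

lemma hasDerivAt_fst (hζ : IsLambertBranchOn ζ Ω) (hp : p ∈ Ω) :
    HasDerivAt (fun s => ζ (s, p.2)) (-ζ p * (p.2 + p.1) / ((1 + ζ p) * p.1 ^ 2)) p.1 := by
  have hp1 := hζ.fst_ne_zero p hp
  have hrhs : HasDerivAt (fun s => exp (p.2 / s) / s)
      ((exp (p.2 / p.1) * ((0 * p.1 - p.2 * 1) / p.1 ^ 2) * p.1 - exp (p.2 / p.1) * 1)
        / p.1 ^ 2) p.1 :=
    (((hasDerivAt_const p.1 p.2).div (hasDerivAt_id p.1) hp1).exp).div (hasDerivAt_id p.1) hp1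
  have := hasDerivAt_of_mul_exp_eventuallyEq (f := fun s => ζ (s, p.2))
    ((hζ.differentiableAt hp).comp p.1 (differentiableAt_id.prodMk (differentiableAt_const _)))
    hrhs ((hζ.isOpen.eventually_mem_fst_line hp).mono fun s hs => hζ.mul_exp_eq _ hs)
    (hζ.ne_neg_one p hp)
  convert this using 1
  have h1 := hζ.one_add_ne_zero hp
  rw [hζ.exp_div_eq hp]
  field_simp
  ring

lemma hasDerivAt_snd (hζ : IsLambertBranchOn ζ Ω) (hp : p ∈ Ω) :
    HasDerivAt (fun t => ζ (p.1, t)) (ζ p / ((1 + ζ p) * p.1)) p.2 := by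
  have hp1 := hζ.fst_ne_zero p hp
  have hrhs : HasDerivAt (fun t => exp (t / p.1) / p.1) (exp (p.2 / p.1) * (1 / p.1) / p.1) p.2 :=
    (((hasDerivAt_id _).div_const p.1).exp).div_const p.1
  have := hasDerivAt_of_mul_exp_eventuallyEq (f := fun t => ζ (p.1, t))
    ((hζ.differentiableAt hp).comp p.2 ((differentiableAt_const _).prodMk differentiableAt_id))
    hrhs ((hζ.isOpen.eventually_mem_snd_line hp).mono fun t ht => hζ.mul_exp_eq _ ht)
    (hζ.ne_neg_one p hp)
  convert this using 1
  have h1 := hζ.one_add_ne_zero hp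
  rw [hζ.exp_div_eq hp]
  field_simp

lemma isBurgersSolOn (hζ : IsLambertBranchOn ζ Ω) :
    IsBurgersSolOn (fun p => p.2 / p.1 - ζ p) Ω := by
  refine ⟨(contDiff_snd.contDiffOn.div contDiff_fst.contDiffOn hζ.fst_ne_zero).sub hζ.contDiffOn,
    fun p hp => ?_⟩
  have hp1 := hζ.fst_ne_zero p hp
  have h1 := hζ.one_add_ne_zero hp
  have hd1 : d1 (fun p => p.2 / p.1 - ζ p) p = _ :=
    (((hasDerivAt_const p.1 p.2).div (hasDerivAt_id p.1) hp1).sub (hζ.hasDerivAt_fst hp)).deriv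
  have hd2 : d2 (fun p => p.2 / p.1 - ζ p) p = _ :=
    (((hasDerivAt_id p.2).div_const p.1).sub (hζ.hasDerivAt_snd hp)).deriv
  rw [hd1, hd2, id]
  field_simp
  ring

/-- `ζ³/3 + (3/2)ζ² + 2ζ` has derivative `(ζ + 1)(ζ + 2)` in `ζ`, whose factor `1 + ζ` cancels the
denominator of `∂₂ζ`. -/
lemma d2_eqOn (hζ : IsLambertBranchOn ζ Ω) :
    EqOn (d2 fun p => p.2 ^ 3 / (6 * p.1)
        - p.1 ^ 2 / 2 * ((ζ p) ^ 3 / 3 + (3 / 2) * (ζ p) ^ 2 + 2 * ζ p))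
      (fun p => p.2 ^ 2 / (2 * p.1) - p.1 / 2 * (ζ p * (ζ p + 2))) Ω := by
  intro p hp
  have hp1 := hζ.fst_ne_zero p hp
  have h1 := hζ.one_add_ne_zero hp
  have hζ2 := hζ.hasDerivAt_snd hp
  refine (((hasDerivAt_pow 3 p.2).div_const (6 * p.1)).sub (HasDerivAt.const_mul (p.1 ^ 2 / 2)
    ((((hζ2.pow 3).div_const 3).add ((hζ2.pow 2).const_mul (3 / 2))).add
      (hζ2.const_mul 2)))).deriv.trans ?_
  field_simp
  ring

lemma d2_d2_eqOn (hζ : IsLambertBranchOn ζ Ω) :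
    EqOn (d2 (d2 fun p => p.2 ^ 3 / (6 * p.1)
        - p.1 ^ 2 / 2 * ((ζ p) ^ 3 / 3 + (3 / 2) * (ζ p) ^ 2 + 2 * ζ p)))
      (fun p => p.2 / p.1 - ζ p) Ω := by
  intro p hp
  have hp1 := hζ.fst_ne_zero p hp
  have h1 := hζ.one_add_ne_zero hp
  have hζ2 := hζ.hasDerivAt_snd hp
  rw [d2_congr_of_eqOn hζ.isOpen hζ.d2_eqOn hp]
  refine (((hasDerivAt_pow 2 p.2).div_const (2 * p.1)).sub
    ((hζ2.mul (hζ2.add_const 2)).const_mul (p.1 / 2))).deriv.trans ?_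
  field_simp
  ring

lemma isRedSolOn (hζ : IsLambertBranchOn ζ Ω) :
    IsRedSolOn (fun p => p.2 ^ 3 / (6 * p.1)
      - p.1 ^ 2 / 2 * ((ζ p) ^ 3 / 3 + (3 / 2) * (ζ p) ^ 2 + 2 * ζ p)) Ω := by
  have hsmooth : ContDiffOn ℝ (⊤ : ℕ∞) (fun p : ℝ × ℝ => p.2 ^ 3 / (6 * p.1)
      - p.1 ^ 2 / 2 * ((ζ p) ^ 3 / 3 + (3 / 2) * (ζ p) ^ 2 + 2 * ζ p)) Ω :=
    ((contDiff_snd.pow 3).contDiffOn.div (contDiff_const.mul contDiff_fst).contDiffOn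
        fun p hp => mul_ne_zero (by norm_num) (hζ.fst_ne_zero p hp)).sub
      (((contDiff_fst.pow 2).contDiffOn.div_const 2).mul
        ((((hζ.contDiffOn.pow 3).div_const 3).add (contDiffOn_const.mul (hζ.contDiffOn.pow 2))).add
          (contDiffOn_const.mul hζ.contDiffOn)))
  exact IsRedSolOn.of_d2_d2_eqOn hζ.isOpen hsmooth hζ.isBurgersSolOn hζ.d2_d2_eqOn

end IsLambertBranchOn

theorem statement19_general (Ω : Set (ℝ × ℝ)) (hΩ : IsOpen Ω) (hΩ1 : ∀ p ∈ Ω, p.1 ≠ 0)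
    (ζ : ℝ × ℝ → ℝ) (hζ : ContDiffOn ℝ (⊤ : ℕ∞) ζ Ω)
    (hζW : ∀ p ∈ Ω, ζ p * Real.exp (ζ p) = Real.exp (p.2 / p.1) / p.1)
    (hζ1 : ∀ p ∈ Ω, ζ p ≠ -1) :
    IsBurgersSolOn (fun p => p.2 / p.1 - ζ p) Ω ∧
    IsRedSolOn (fun p =>
        p.2 ^ 3 / (6 * p.1)
          - p.1 ^ 2 / 2 * ((ζ p) ^ 3 / 3 + (3 / 2) * (ζ p) ^ 2 + 2 * ζ p)) Ω := by
  have hbranch : IsLambertBranchOn ζ Ω := ⟨hΩ, hΩ1, hζ, hζW, hζ1⟩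
  exact ⟨hbranch.isBurgersSolOn, hbranch.isRedSolOn⟩

/-- Solutions obtained by reduction 1.7 in terms of a branch `ζ` of the
Lambert `W` function of `e^{z₂/z₁}/z₁`: `h = z₂/z₁ − ζ` solves the inviscid Burgers
equation and `w = z₂³/(6z₁) − (z₁²/2)(ζ³/3 + (3/2)ζ² + 2ζ)` solves the reduced equation. -/
theorem statement19 (Ω : Set (ℝ × ℝ)) (hΩ : IsOpen Ω) (hΩ1 : ∀ p ∈ Ω, p.1 ≠ 0)
    (ζ : ℝ × ℝ → ℝ) (hζ : ContDiffOn ℝ (⊤ : ℕ∞) ζ Ω)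
    (hζW : ∀ p ∈ Ω, ζ p * Real.exp (ζ p) = Real.exp (p.2 / p.1) / p.1)
    (hζ0 : ∀ p ∈ Ω, ζ p ≠ 0) (hζ1 : ∀ p ∈ Ω, ζ p ≠ -1) :
    IsBurgersSolOn (fun p => p.2 / p.1 - ζ p) Ω ∧
    IsRedSolOn (fun p =>
        p.2 ^ 3 / (6 * p.1)
          - p.1 ^ 2 / 2 * ((ζ p) ^ 3 / 3 + (3 / 2) * (ζ p) ^ 2 + 2 * ζ p)) Ω :=
  statement19_general Ω hΩ hΩ1 ζ hζ hζW hζ1
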